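/- arXiv:1601.06420 — 3 statements merged into one kernel-verified Lean document; each statement's English description precedes it below -/
import Mathlib

section
/- The function F(k)^2 = (1/k)(1 - e^{-4k} - 4k e^{-2k}) / (1 - e^{-2k})^2 is strictly decreasing on (0, ∞). -/
/-!
In terms of hyperbolic functions, `F(k)² = (sinh k cosh k - k) / (k sinh² k)`, whose derivative
has the sign of `2 k² cosh k - k sinh k - cosh k sinh² k`. This is negative because
`sinh² k - k² > 2 k (sinh k - k) ≥ k (k - tanh k)`, the last step being Huygens' inequality
`2 sinh k + tanh k ≥ 3 k`.
-/

open Real Set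

lemma hasDerivAt_tanh (x : ℝ) : HasDerivAt tanh (1 / cosh x ^ 2) x := by
  rw [show tanh = sinh / cosh from funext tanh_eq_sinh_div_cosh]
  refine ((hasDerivAt_sinh x).div (hasDerivAt_cosh x) (cosh_pos x).ne').congr_deriv ?_
  rw [← cosh_sq_sub_sinh_sq x]
  ring

/-- Huygens' inequality for the hyperbolic functions. -/
lemma three_mul_le_two_mul_sinh_add_tanh {x : ℝ} (hx : 0 ≤ x) :
    3 * x ≤ 2 * sinh x + tanh x := by
  have hmono : Monotone fun y => 2 * sinh y + tanh y - 3 * y := by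
    refine monotone_of_hasDerivAt_nonneg
      (fun y => (((hasDerivAt_sinh y).const_mul 2).add (hasDerivAt_tanh y)).sub
        ((hasDerivAt_id y).const_mul 3)) fun y => ?_
    have hc := cosh_pos y
    -- AM-GM for `cosh y, cosh y, 1 / cosh y ^ 2`
    calc (0 : ℝ) ≤ (cosh y - 1) ^ 2 * (2 * cosh y + 1) / cosh y ^ 2 := by positivity
      _ = 2 * cosh y + 1 / cosh y ^ 2 - 3 * 1 := by field_simp; ring
  simpa using hmono hx

lemma two_mul_sq_mul_cosh_lt {x : ℝ} (hx : 0 < x) :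
    2 * x ^ 2 * cosh x < x * sinh x + cosh x * sinh x ^ 2 := by
  have hs : x < sinh x := self_lt_sinh_iff.2 hx
  have hc := cosh_pos x
  have hhuygens := three_mul_le_two_mul_sinh_add_tanh hx.le
  rw [tanh_eq_sinh_div_cosh] at hhuygens
  have key : 2 * x ^ 2 < x * (sinh x / cosh x) + sinh x ^ 2 := by
    nlinarith [mul_le_mul_of_nonneg_left hhuygens hx.le, mul_pos (sub_pos.2 hs) (sub_pos.2 hs)]
  calc 2 * x ^ 2 * cosh x < (x * (sinh x / cosh x) + sinh x ^ 2) * cosh x :=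
        mul_lt_mul_of_pos_right key hc
    _ = x * sinh x + cosh x * sinh x ^ 2 := by field_simp

lemma strictAntiOn_sinh_mul_cosh_sub_div :
    StrictAntiOn (fun x => (sinh x * cosh x - x) / (x * sinh x ^ 2)) (Ioi 0) := by
  have hderiv (x : ℝ) (hx : 0 < x) :
      HasDerivAt (fun x => (sinh x * cosh x - x) / (x * sinh x ^ 2))
      (-sinh x * (x * sinh x + cosh x * sinh x ^ 2 - 2 * x ^ 2 * cosh x) / (x * sinh x ^ 2) ^ 2)
      x := by
    refine (((hasDerivAt_sinh x).mul (hasDerivAt_cosh x)).sub (hasDerivAt_id x)).div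
      ((hasDerivAt_id x).mul ((hasDerivAt_sinh x).pow 2))
      (mul_pos hx (pow_pos (sinh_pos_iff.2 hx) 2)).ne' |>.congr_deriv ?_
    simp only [Pi.mul_apply, Pi.sub_apply, Pi.pow_apply, id, Nat.cast_ofNat]
    linear_combination x * sinh x ^ 2 * sinh_sq x / (x * sinh x ^ 2) ^ 2
  refine strictAntiOn_of_hasDerivWithinAt_neg (convex_Ioi 0)
    (fun x hx => (hderiv x hx).continuousAt.continuousWithinAt)
    (fun x hx => (hderiv x (interior_subset hx)).hasDerivWithinAt) fun x hx => ?_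
  rw [interior_Ioi] at hx
  have hs := sinh_pos_iff.2 hx
  refine div_neg_of_neg_of_pos ?_ (pow_pos (mul_pos hx (pow_pos hs 2)) 2)
  nlinarith [two_mul_sq_mul_cosh_lt hx]

lemma cv_sq_eq (k : ℝ) :
    (1 / k) * (1 - exp (-4 * k) - 4 * k * exp (-2 * k)) / (1 - exp (-2 * k)) ^ 2 =
      (sinh k * cosh k - k) / (k * sinh k ^ 2) := by
  rcases eq_or_ne k 0 with rfl | hk
  · simp
  have hs : sinh k ≠ 0 := sinh_ne_zero.2 hk
  have hd : 1 - exp (-2 * k) ≠ 0 := by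
    rw [sub_ne_zero, ne_comm, Ne, exp_eq_one_iff]; simpa using hk
  have e2 : exp (-2 * k) = (exp k)⁻¹ ^ 2 := by rw [← exp_neg, ← exp_nat_mul]; ring_nf
  have e4 : exp (-4 * k) = (exp k)⁻¹ ^ 4 := by rw [← exp_neg, ← exp_nat_mul]; ring_nf
  rw [sinh_eq, exp_neg] at hs
  rw [e2] at hd
  rw [e2, e4, sinh_eq, cosh_eq, exp_neg]
  field_simp
  ring

theorem cv_sq_strictAnti :
    StrictAntiOn (fun k : ℝ =>
        (1 / k) * (1 - Real.exp (-4 * k) - 4 * k * Real.exp (-2 * k)) /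
          (1 - Real.exp (-2 * k)) ^ 2)
      (Set.Ioi 0) := by
  simp_rw [cv_sq_eq]
  exact strictAntiOn_sinh_mul_cosh_sub_div
end

section
/- The limit as (k_z, k_x) → (0,0) along k_x = βk_z, β ∈ (−1,1) fixed, of the expression [4k_z² csch²(2k_z) + 2k_z coth(2k_z) − (k_x+k_z)² csch²(k_x+k_z) − (k_x+k_z) coth(k_x+k_z)]^{1/2} / [2k_z coth(2k_z) − (k_x+k_z) coth(k_x+k_z)] equals √(2(β² + 2β + 5)/(5(3 − 2β − β²))). -/
open Filter

/-- Hyperbolic cotangent. -/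
noncomputable def coth (x : ℝ) : ℝ := Real.cosh x / Real.sinh x

/-- Hyperbolic cosecant. -/
noncomputable def csch (x : ℝ) : ℝ := 1 / Real.sinh x

/-!
Put `q y = y ^ 2 + y * sinh y - 4 * cosh y + 4`. Its third derivative is `y * cosh y - sinh y`,
which is `y ^ 3 / 3 + o(y ^ 3)`, so three steps of L'Hôpital's rule give `q y = y ^ 6 / 360 + o(y ^ 6)`.
Since `x ^ 2 * csch x ^ 2 + x * coth x - 2 = q (2 * x) / (4 * sinh x ^ 2)` and
`x * coth x - 1 = (x * cosh x - sinh x) / sinh x`, with `c = β + 1` the quantity under the root is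
`(2 / 45) * (2 ^ 4 - c ^ 4) * k ^ 4 + o(k ^ 4)` and the denominator `(1 / 3) * (2 ^ 2 - c ^ 2) * k ^ 2 + o(k ^ 2)`;
the powers of `k` cancel in the quotient.
-/

open Topology Real

theorem tendsto_div_pow_succ_of_hasDerivAt {f f' : ℝ → ℝ} {l : ℝ} (n : ℕ)
    (hf : ∀ x, HasDerivAt f (f' x) x) (hf0 : f 0 = 0)
    (hf' : Tendsto (fun x => f' x / x ^ n) (𝓝[>] 0) (𝓝 ((n + 1) * l))) :
    Tendsto (fun x => f x / x ^ (n + 1)) (𝓝[>] 0) (𝓝 l) := by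
  have hn : (n : ℝ) + 1 ≠ 0 := by positivity
  refine HasDerivAt.lhopital_zero_nhdsGT (f' := f') (g' := fun x => (n + 1) * x ^ n)
    (.of_forall hf) (.of_forall fun x => by simpa using hasDerivAt_pow (n + 1) x) ?_ ?_ ?_ ?_
  · filter_upwards [self_mem_nhdsWithin] with x (hx : 0 < x) using by positivity
  · simpa [hf0] using tendsto_nhdsWithin_of_tendsto_nhds (hf 0).continuousAt.tendsto
  · simpa using tendsto_nhdsWithin_of_tendsto_nhds ((continuous_pow (n + 1)).tendsto (0 : ℝ))
  · convert hf'.div_const ((n : ℝ) + 1) using 2 with x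
    · field_simp
    · field_simp

theorem tendsto_mul_nhdsGT_zero {a : ℝ} (ha : 0 < a) :
    Tendsto (a * ·) (𝓝[>] 0) (𝓝[>] 0) := by
  conv_lhs => rw [← comap_mulLeft_nhdsGT_zero ha]
  exact tendsto_comap

theorem tendsto_sinh_div_self : Tendsto (fun x => sinh x / x) (𝓝[>] 0) (𝓝 1) := by
  simpa using tendsto_div_pow_succ_of_hasDerivAt 0 hasDerivAt_sinh sinh_zero
    (by simpa using tendsto_nhdsWithin_of_tendsto_nhds (continuous_cosh.tendsto 0))

theorem tendsto_self_div_sinh : Tendsto (fun x => x / sinh x) (𝓝[>] 0) (𝓝 1) := by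
  simpa using tendsto_sinh_div_self.inv₀ one_ne_zero

theorem tendsto_mul_cosh_sub_sinh_div_pow_three :
    Tendsto (fun x => (x * cosh x - sinh x) / x ^ 3) (𝓝[>] 0) (𝓝 (1 / 3)) := by
  have h : (fun x => sinh x / x) =ᶠ[𝓝[>] 0] fun x => x * sinh x / x ^ 2 := by
    filter_upwards [self_mem_nhdsWithin] with x (hx : 0 < x)
    field_simp
  exact tendsto_div_pow_succ_of_hasDerivAt 2 (f' := fun x => x * sinh x)
    (fun x => (((hasDerivAt_id' x).fun_mul (hasDerivAt_cosh x)).fun_sub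
      (hasDerivAt_sinh x)).congr_deriv (by ring))
    (by simp) (by convert tendsto_sinh_div_self.congr' h using 2; norm_num)

theorem tendsto_sq_add_mul_sinh_sub_four_mul_cosh_add_four_div_pow_six :
    Tendsto (fun x => (x ^ 2 + x * sinh x - 4 * cosh x + 4) / x ^ 6) (𝓝[>] 0) (𝓝 (1 / 360)) := by
  have h₄ : Tendsto (fun x => (2 + x * sinh x - 2 * cosh x) / x ^ 4) (𝓝[>] 0) (𝓝 (1 / 12)) :=
    tendsto_div_pow_succ_of_hasDerivAt 3 (f' := fun x => x * cosh x - sinh x)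
      (fun x => ((((hasDerivAt_id' x).fun_mul (hasDerivAt_sinh x)).const_add 2).fun_sub
        ((hasDerivAt_cosh x).const_mul 2)).congr_deriv (by ring))
      (by simp) (by convert tendsto_mul_cosh_sub_sinh_div_pow_three using 2; norm_num)
  have h₅ : Tendsto (fun x => (2 * x + x * cosh x - 3 * sinh x) / x ^ 5) (𝓝[>] 0) (𝓝 (1 / 60)) :=
    tendsto_div_pow_succ_of_hasDerivAt 4 (f' := fun x => 2 + x * sinh x - 2 * cosh x)
      (fun x => ((((hasDerivAt_id' x).const_mul 2).fun_add
        ((hasDerivAt_id' x).fun_mul (hasDerivAt_cosh x))).fun_sub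
        ((hasDerivAt_sinh x).const_mul 3)).congr_deriv (by ring))
      (by simp) (by convert h₄ using 2; norm_num)
  exact tendsto_div_pow_succ_of_hasDerivAt 5 (f' := fun x => 2 * x + x * cosh x - 3 * sinh x)
    (fun x => ((((hasDerivAt_pow 2 x).fun_add
      ((hasDerivAt_id' x).fun_mul (hasDerivAt_sinh x))).fun_sub
      ((hasDerivAt_cosh x).const_mul 4)).add_const 4).congr_deriv (by push_cast; ring))
    (by simp) (by convert h₅ using 2; norm_num)

theorem tendsto_mul_coth_sub_one_div_sq :
    Tendsto (fun x => (x * coth x - 1) / x ^ 2) (𝓝[>] 0) (𝓝 (1 / 3)) := by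
  have h := tendsto_mul_cosh_sub_sinh_div_pow_three.mul tendsto_self_div_sinh
  rw [mul_one] at h
  refine h.congr' ?_
  filter_upwards [self_mem_nhdsWithin] with x (hx : 0 < x)
  have hs : sinh x ≠ 0 := (sinh_pos_iff.mpr hx).ne'
  unfold coth
  field_simp

theorem tendsto_sq_mul_csch_sq_add_mul_coth_sub_two_div_pow_four :
    Tendsto (fun x => (x ^ 2 * csch x ^ 2 + x * coth x - 2) / x ^ 4) (𝓝[>] 0) (𝓝 (2 / 45)) := by
  have h := ((tendsto_sq_add_mul_sinh_sub_four_mul_cosh_add_four_div_pow_six.comp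
    (tendsto_mul_nhdsGT_zero two_pos)).const_mul 16).mul (tendsto_self_div_sinh.pow 2)
  rw [show (16 : ℝ) * (1 / 360) * 1 ^ 2 = 2 / 45 by norm_num] at h
  refine h.congr' ?_
  filter_upwards [self_mem_nhdsWithin] with x (hx : 0 < x)
  have hs : sinh x ≠ 0 := (sinh_pos_iff.mpr hx).ne'
  simp only [Function.comp_apply, csch, coth, sinh_two_mul, cosh_two_mul, cosh_sq]
  field_simp
  ring

theorem tendsto_sub_comp_mul_div_pow {φ : ℝ → ℝ} {v L : ℝ} {n : ℕ}
    (hφ : Tendsto (fun x => (φ x - v) / x ^ n) (𝓝[>] 0) (𝓝 L)) {a b : ℝ} (ha : 0 < a) (hb : 0 < b) :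
    Tendsto (fun k => (φ (a * k) - φ (b * k)) / k ^ n) (𝓝[>] 0) (𝓝 ((a ^ n - b ^ n) * L)) := by
  have h := ((hφ.comp (tendsto_mul_nhdsGT_zero ha)).const_mul (a ^ n)).sub
    ((hφ.comp (tendsto_mul_nhdsGT_zero hb)).const_mul (b ^ n))
  rw [← sub_mul] at h
  refine h.congr' ?_
  filter_upwards [self_mem_nhdsWithin] with k (hk : 0 < k)
  simp only [Function.comp_apply]
  field_simp
  ring

theorem cv_plus_limit (β : ℝ) (hβ : β ∈ Set.Ioo (-1 : ℝ) 1) :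
    Tendsto (fun kz : ℝ =>
        Real.sqrt (4 * kz ^ 2 * csch (2 * kz) ^ 2 + 2 * kz * coth (2 * kz) -
            (β * kz + kz) ^ 2 * csch (β * kz + kz) ^ 2 -
            (β * kz + kz) * coth (β * kz + kz)) /
          (2 * kz * coth (2 * kz) - (β * kz + kz) * coth (β * kz + kz)))
      (nhdsWithin 0 (Set.Ioi 0))
      (nhds (Real.sqrt (2 * (β ^ 2 + 2 * β + 5) / (5 * (3 - 2 * β - β ^ 2))))) := by
  obtain ⟨hβ₁, hβ₂⟩ := hβ
  have hc : 0 < β + 1 := by linarith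
  have hden_pos : 0 < (2 ^ 2 - (β + 1) ^ 2) * (1 / 3 : ℝ) := by nlinarith
  have hnum := tendsto_sub_comp_mul_div_pow (φ := fun x => x ^ 2 * csch x ^ 2 + x * coth x)
    tendsto_sq_mul_csch_sq_add_mul_coth_sub_two_div_pow_four two_pos hc
  have hden := tendsto_sub_comp_mul_div_pow (φ := fun x => x * coth x)
    tendsto_mul_coth_sub_one_div_sq two_pos hc
  have hlim : √((2 ^ 4 - (β + 1) ^ 4) * (2 / 45)) / ((2 ^ 2 - (β + 1) ^ 2) * (1 / 3)) =
      √(2 * (β ^ 2 + 2 * β + 5) / (5 * (3 - 2 * β - β ^ 2))) := by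
    have hq : 0 < 3 - 2 * β - β ^ 2 := by nlinarith
    rw [← sqrt_sq hden_pos.le, ← sqrt_div' _ (sq_nonneg _),
      show (2 : ℝ) ^ 2 - (β + 1) ^ 2 = 3 - 2 * β - β ^ 2 by ring,
      show (2 : ℝ) ^ 4 - (β + 1) ^ 4 = (3 - 2 * β - β ^ 2) * (β ^ 2 + 2 * β + 5) by ring]
    congr 1
    field_simp
    ring
  rw [← hlim]
  refine (hnum.sqrt.div hden hden_pos.ne').congr' ?_
  filter_upwards [self_mem_nhdsWithin] with k (hk : 0 < k)
  rw [Pi.div_apply, sqrt_div' _ (by positivity), show k ^ 4 = (k ^ 2) ^ 2 by ring,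
    sqrt_sq (by positivity), div_div_div_cancel_right₀ (by positivity),
    show β * k + k = (β + 1) * k by ring]
  congr 2
  ring
end

section
/- For the function g(x₀) = [3k_z·tanh(k_z) − 3k_z²·sech²(k_z) − 2k_z³·tanh(k_z)·sech²(k_z)], one has g(k_z) > 0 for all k_z > 0; i.e., 3 tanh(k) − 3k sech²(k) − 2k² tanh(k) sech²(k) > 0 for all k > 0. -/
/-- Hyperbolic secant. -/
noncomputable def sech (x : ℝ) : ℝ := 1 / Real.cosh x

/-!
Multiplying by `cosh³ k`, the claim is `3 sinh k cosh² k - 3 k cosh k - 2 k² sinh k > 0`.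
The Padé-type bound `3 k cosh k < (3 + k²) sinh k` (i.e. `tanh k > 3k / (3 + k²)`) turns the
left side into something larger than `3 sinh k (cosh² k - 1 - k²) = 3 sinh k (sinh² k - k²)`,
which is positive since `sinh k > k`. The Padé bound holds because the difference vanishes at `0`
and has derivative `k (k cosh k - sinh k) > 0`.
-/

open Real Set

lemma pos_of_hasDerivAt_pos_of_eq_zero {f f' : ℝ → ℝ} (hf : ∀ x, HasDerivAt f (f' x) x)
    (hf₀ : f 0 = 0) (hf' : ∀ x, 0 < x → 0 < f' x) {x : ℝ} (hx : 0 < x) : 0 < f x := by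
  have hmono : StrictMonoOn f (Ici 0) :=
    strictMonoOn_of_hasDerivWithinAt_pos (convex_Ici 0)
      (fun y _ => (hf y).continuousAt.continuousWithinAt)
      (fun y _ => (hf y).hasDerivWithinAt)
      (fun y hy => hf' y (by rwa [interior_Ici, mem_Ioi] at hy))
  simpa only [hf₀] using hmono self_mem_Ici hx.le hx

lemma Real.sinh_lt_mul_cosh {x : ℝ} (hx : 0 < x) : sinh x < x * cosh x := by
  have hderiv (y : ℝ) : HasDerivAt (fun y => y * cosh y - sinh y) (y * sinh y) y := by
    refine (((hasDerivAt_id' y).mul (hasDerivAt_cosh y)).sub (hasDerivAt_sinh y)).congr_deriv ?_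
    ring
  have := pos_of_hasDerivAt_pos_of_eq_zero hderiv (by simp)
    (fun y hy => mul_pos hy (sinh_pos_iff.mpr hy)) hx
  linarith

lemma Real.mul_cosh_lt_sinh_mul {x : ℝ} (hx : 0 < x) :
    3 * x * cosh x < (3 + x ^ 2) * sinh x := by
  have hderiv (y : ℝ) : HasDerivAt (fun y => (3 + y ^ 2) * sinh y - 3 * y * cosh y)
      (y * (y * cosh y - sinh y)) y := by
    refine ((((hasDerivAt_pow 2 y).const_add 3).mul (hasDerivAt_sinh y)).sub
      (((hasDerivAt_id' y).const_mul 3).mul (hasDerivAt_cosh y))).congr_deriv ?_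
    ring
  have := pos_of_hasDerivAt_pos_of_eq_zero hderiv (by simp)
    (fun y hy => mul_pos hy (sub_pos.mpr (sinh_lt_mul_cosh hy))) hx
  linarith

lemma third_central_moment_numerator_pos {k : ℝ} (hk : 0 < k) :
    0 < 3 * sinh k * cosh k ^ 2 - 3 * k * cosh k - 2 * k ^ 2 * sinh k := by
  have hsinh : 0 < sinh k := sinh_pos_iff.mpr hk
  have hk_lt : k < sinh k := self_lt_sinh_iff.mpr hk
  have hlower : 3 * sinh k * (sinh k ^ 2 - k ^ 2) <
      3 * sinh k * cosh k ^ 2 - 3 * k * cosh k - 2 * k ^ 2 * sinh k := by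
    rw [cosh_sq']
    linarith [mul_cosh_lt_sinh_mul hk]
  have : 0 < 3 * sinh k * (sinh k ^ 2 - k ^ 2) :=
    mul_pos (by positivity) (by nlinarith)
  linarith

lemma third_central_moment_eq_div (k : ℝ) :
    3 * tanh k - 3 * k * sech k ^ 2 - 2 * k ^ 2 * tanh k * sech k ^ 2 =
      (3 * sinh k * cosh k ^ 2 - 3 * k * cosh k - 2 * k ^ 2 * sinh k) / cosh k ^ 3 := by
  have := (cosh_pos k).ne'
  rw [tanh_eq_sinh_div_cosh, sech]
  field_simp

theorem third_central_moment_pos (k : ℝ) (hk : 0 < k) :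
    3 * Real.tanh k - 3 * k * sech k ^ 2 - 2 * k ^ 2 * Real.tanh k * sech k ^ 2 > 0 := by
  rw [third_central_moment_eq_div]
  exact div_pos (third_central_moment_numerator_pos hk) (pow_pos (cosh_pos k) 3)
end
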